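/- Let Q ∈ ℂ[T₁,…,T_ℓ] be a nonzero multivariate polynomial and t = (t₁,…,t_ℓ) ∈ ℂ^ℓ a point with Q(t) = 0. Then there exist univariate polynomials u₁,…,u_ℓ ∈ ℂ[ε] such that uᵢ(0) = tᵢ for all i, and the univariate polynomial Q(u₁(ε),…,u_ℓ(ε)) ∈ ℂ[ε] is not identically zero. -/
import Mathlib


open MvPolynomial

/-- If `Q` is a nonzero multivariate polynomial over `ℂ` and `Q(t) = 0`,
then there are univariate polynomials `u i` with `u i (0) = t i` such that
`Q(u₁(ε),…,u_ℓ(ε))` is not the zero polynomial. -/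
theorem stmt0 (ℓ : ℕ) (Q : MvPolynomial (Fin ℓ) ℂ) (hQ : Q ≠ 0)
    (t : Fin ℓ → ℂ) (ht : MvPolynomial.eval t Q = 0) :
    ∃ u : Fin ℓ → Polynomial ℂ,
      (∀ i, (u i).eval 0 = t i) ∧ MvPolynomial.aeval u Q ≠ 0 := by
  obtain ⟨a, ha⟩ : ∃ a : Fin ℓ → ℂ, MvPolynomial.eval a Q ≠ 0 := by
    by_contra h
    push_neg at h
    exact hQ (MvPolynomial.funext fun x => by simp [h x])
  refine ⟨fun i => Polynomial.C (t i) + Polynomial.C (a i - t i) * Polynomial.X,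
    fun i => by simp, fun h => ha ?_⟩
  have key : Polynomial.eval 1 (MvPolynomial.aeval
      (fun i => Polynomial.C (t i) + Polynomial.C (a i - t i) * Polynomial.X) Q)
      = MvPolynomial.eval a Q := by
    have := MvPolynomial.eval₂_comp_left (Polynomial.evalRingHom 1)
      (algebraMap ℂ (Polynomial ℂ))
      (fun i => Polynomial.C (t i) + Polynomial.C (a i - t i) * Polynomial.X) Q
    rw [MvPolynomial.aeval_def]
    simp only [Polynomial.coe_evalRingHom] at this
    rw [this]
    congr 1
    · ext x
      simp
    · funext i
      simp
  rw [← key, h, Polynomial.eval_zero]
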